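/- A bijection σ : 𝒢 → 𝒢 is an automorphism of the distant graph (𝒢, △), i.e. σ and σ⁻¹ preserve the distant relation, if and only if σ is an automorphism of the space of Z-reguli (𝒢, ℜ), i.e. σ and σ⁻¹ map every Z-regulus onto a Z-regulus. -/

import Mathlib

/-- The Grassmannian `𝒢` of all subspaces `X ≤ V` with `X ≅ V/X`. -/
def Grass (K V : Type*) [DivisionRing K] [AddCommGroup V] [Module K V] :
    Set (Submodule K V) :=
  {X | Nonempty (X ≃ₗ[K] (V ⧸ X))}

variable {K V : Type*} [DivisionRing K] [AddCommGroup V] [Module K V]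

/-- The dimension of the quotient `E / M` (computed as the rank of `E ⧸ (M ∩ E)`). -/
noncomputable def quotRank (M E : Submodule K V) : Cardinal :=
  Module.rank K (E ⧸ (M.comap E.subtype))

/-- Two subspaces are adjacent if `dim (X/(X ⊓ Y)) = dim (Y/(X ⊓ Y)) = 1`. -/
def Adjacent (X Y : Submodule K V) : Prop :=
  quotRank (X ⊓ Y) X = 1 ∧ quotRank (X ⊓ Y) Y = 1

/-- Two subspaces are distant if they are complementary: `X ⊕ Y = V`. -/
def Distant (X Y : Submodule K V) : Prop := IsCompl X Y

/-- The star `𝒢[M⟩` with centre `M`. -/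
def starSet (M : Submodule K V) : Set (Submodule K V) :=
  {E | M ≤ E ∧ quotRank M E = 1}

/-- `M` is the centre of a star, i.e. there is `X ∈ 𝒢` with `M ≤ X`, `dim (X/M) = 1`. -/
def IsStarCentre (M : Submodule K V) : Prop :=
  ∃ X ∈ Grass K V, M ≤ X ∧ quotRank M X = 1

/-- The top `𝒢⟨N]` with carrier `N`. -/
def topSet (N : Submodule K V) : Set (Submodule K V) :=
  {E | E ≤ N ∧ quotRank E N = 1}

/-- `N` is the carrier of a top, i.e. there is `X ∈ 𝒢` with `X ≤ N`, `dim (N/X) = 1`. -/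
def IsTopCarrier (N : Submodule K V) : Prop :=
  ∃ X ∈ Grass K V, X ≤ N ∧ quotRank X N = 1

/-- An adjacency clique: a set of mutually adjacent elements of `𝒢`. -/
def IsAdjClique (A : Set (Submodule K V)) : Prop :=
  A ⊆ Grass K V ∧ A.Pairwise Adjacent

/-- A maximal adjacency clique. -/
def IsMaxAdjClique (A : Set (Submodule K V)) : Prop :=
  IsAdjClique A ∧ ∀ B, IsAdjClique B → A ⊆ B → A = B

/-- The pencil `𝒢[M,N] = {X ∈ 𝒢 | M < X < N}`. -/
def pencilSet (M N : Submodule K V) : Set (Submodule K V) :=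
  {X ∈ Grass K V | M < X ∧ X < N}

/-- `(M, N)` defines a pencil: there is `X ∈ 𝒢` with `M ≤ X ≤ N` and
`dim (X/M) = dim (N/X) = 1`. -/
def IsPencilPair (M N : Submodule K V) : Prop :=
  ∃ X ∈ Grass K V, M ≤ X ∧ X ≤ N ∧ quotRank M X = 1 ∧ quotRank X N = 1

/-- A pencil in `𝒢`. -/
def IsPencil (S : Set (Submodule K V)) : Prop :=
  ∃ M N : Submodule K V, IsPencilPair M N ∧ S = pencilSet M N

/-- A point is a one-dimensional subspace. -/
def IsPoint (p : Submodule K V) : Prop := Module.rank K p = 1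

/-- A line is a two-dimensional subspace. -/
def IsLine (L : Submodule K V) : Prop := Module.rank K L = 2

/-- Two subspaces meet if they have a common point, i.e. nonzero intersection. -/
def Meets (X Y : Submodule K V) : Prop := X ⊓ Y ≠ ⊥

/-- A distant clique: a set of mutually distant elements of `𝒢`. -/
def IsDistantClique (R : Set (Submodule K V)) : Prop :=
  R ⊆ Grass K V ∧ R.Pairwise Distant

/-- A set has at least three elements. -/
def HasThree (R : Set (Submodule K V)) : Prop :=
  ∃ A ∈ R, ∃ B ∈ R, ∃ C ∈ R, A ≠ B ∧ A ≠ C ∧ B ≠ C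

/-- Condition (R2): if a line meets three mutually distinct elements of `R`
then it meets all elements of `R`. -/
def MeetsThreeMeetsAll (R : Set (Submodule K V)) : Prop :=
  ∀ L : Submodule K V, IsLine L →
    ∀ E₀ ∈ R, ∀ E₁ ∈ R, ∀ E₂ ∈ R, E₀ ≠ E₁ → E₀ ≠ E₂ → E₁ ≠ E₂ →
      Meets L E₀ → Meets L E₁ → Meets L E₂ → ∀ E ∈ R, Meets L E

/-- A partial `Z`-regulus: conditions (R1) and (R2). -/
def IsPartialZRegulus (R : Set (Submodule K V)) : Prop :=
  (IsDistantClique R ∧ HasThree R) ∧ MeetsThreeMeetsAll R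

/-- A `Z`-regulus: a partial `Z`-regulus that is maximal, i.e. not properly
contained in any partial `Z`-regulus. -/
def IsZRegulus (R : Set (Submodule K V)) : Prop :=
  IsPartialZRegulus R ∧ ∀ S : Set (Submodule K V), IsPartialZRegulus S → R ⊆ S → R = S

/-- A directrix of `R`: a line meeting all elements of `R`. -/
def IsDirectrix (R : Set (Submodule K V)) (L : Submodule K V) : Prop :=
  IsLine L ∧ ∀ E ∈ R, Meets L E

/-- Condition (⊠2) from Theorem `Zreg`. -/
def BoxTwo (R : Set (Submodule K V)) : Prop :=
  ∀ E₀ ∈ R, ∀ E₁ ∈ R, ∀ E₂ ∈ R, E₀ ≠ E₁ → E₀ ≠ E₂ → E₁ ≠ E₂ →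
    ∀ W ∈ Grass K V, Adjacent W E₀ → ¬ Distant W E₁ → ¬ Distant W E₂ →
      ∀ E ∈ R, ¬ Distant W E

/-!
Adjacency of elements of `𝒢` can be read off the distant graph: `X, Y ∈ 𝒢` are adjacent iff
some `Z ∈ 𝒢 \ {X, Y}` has every complement `W ∈ 𝒢` of `Z` distant to `X` or to `Y`. For a
distant clique, condition (R2), which speaks about lines, is equivalent to condition (⊠2), which
only speaks about `𝒢`, `△` and adjacency. Hence a bijection of `𝒢` preserving `△` in both
directions preserves partial `Z`-reguli and, by maximality, `Z`-reguli.

Conversely, two distant `X, Y ∈ 𝒢` have a common complement `W ∈ 𝒢` (the graph of an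
isomorphism `X ≅ Y`); the triple `{X, Y, W}` satisfies (R1) and (R2), so by Zorn's lemma it lies in
a `Z`-regulus, and a bijection mapping `Z`-reguli onto `Z`-reguli keeps `X` and `Y` distant.
-/

open Submodule Set

/-! ### Exchange, complements and ranks -/

lemma ne_zero_of_notMem {U : Submodule K V} {v : V} (hv : v ∉ U) : v ≠ 0 :=
  fun h => hv (h ▸ U.zero_mem)

lemma mem_sup_span_singleton_exchange {U : Submodule K V} {u v : V} (h : u ∈ U ⊔ K ∙ v)
    (hu : u ∉ U) : v ∈ U ⊔ K ∙ u := by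
  rw [sup_comm, ← span_eq U, ← span_insert] at h ⊢
  exact mem_span_insert_exchange h (by rwa [span_eq])

lemma sup_span_singleton_eq_of_mem {U : Submodule K V} {u v : V} (h : u ∈ U ⊔ K ∙ v)
    (hu : u ∉ U) : U ⊔ K ∙ u = U ⊔ K ∙ v :=
  le_antisymm (sup_le le_sup_left ((span_singleton_le_iff_mem _ _).2 h))
    (sup_le le_sup_left
      ((span_singleton_le_iff_mem _ _).2 (mem_sup_span_singleton_exchange h hu)))

lemma eq_inf_sup_span_singleton {X Z : Submodule K V} {x : V} (hx : x ∈ X)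
    (h : X ≤ Z ⊔ K ∙ x) : X = X ⊓ Z ⊔ K ∙ x := by
  have := sup_inf_assoc_of_le Z ((span_singleton_le_iff_mem x X).2 hx)
  rwa [inf_eq_right.2 (sup_comm Z _ ▸ h), inf_comm, sup_comm] at this

lemma le_of_le_sup_span_singleton {A B : Submodule K V} {z : V} (hz : z ∉ A ⊔ B)
    (h : B ≤ A ⊔ K ∙ z) : B ≤ A := by
  have := le_inf h (le_sup_right : B ≤ A ⊔ B)
  rwa [sup_inf_assoc_of_le _ le_sup_left, (disjoint_span_singleton_of_notMem hz).symm.eq_bot,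
    sup_bot_eq] at this

lemma isCompl_sup_span_singleton {W M : Submodule K V} {u v : V} (hWM : Disjoint W M)
    (htop : W ⊔ M ⊔ K ∙ v = ⊤) (hu : u ∉ W ⊔ M) : IsCompl W (M ⊔ K ∙ u) := by
  refine ⟨hWM.disjoint_sup_right_of_disjoint_sup_left (disjoint_span_singleton_of_notMem hu),
    codisjoint_iff.2 ?_⟩
  rw [← sup_assoc, sup_span_singleton_eq_of_mem (htop ▸ mem_top) hu, htop]

lemma isCompl_sup_span_singleton_of_isCompl {A C : Submodule K V} {u : V}
    (hC : IsCompl (A ⊔ K ∙ u) C) (hu : u ∉ A) : IsCompl A (C ⊔ K ∙ u) :=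
  ⟨sup_comm C _ ▸ (disjoint_span_singleton_of_notMem hu).disjoint_sup_right_of_disjoint_sup_left
    hC.disjoint, codisjoint_iff.2 (by rw [← sup_assoc, sup_right_comm, hC.sup_eq_top])⟩

lemma notMem_of_isCompl_sup_span_singleton {A C : Submodule K V} {u : V}
    (hC : IsCompl (A ⊔ K ∙ u) C) (hu : u ∉ A) : u ∉ C :=
  fun h => ne_zero_of_notMem hu
    (disjoint_def.1 hC.disjoint u (mem_sup_right (mem_span_singleton_self u)) h)

lemma rank_span_singleton {v : V} (hv : v ≠ 0) : Module.rank K (K ∙ v) = 1 := by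
  rw [← Module.finrank_eq_rank, finrank_span_singleton hv, Nat.cast_one]

lemma rank_sup_of_disjoint {s t : Submodule K V} (h : Disjoint s t) :
    Module.rank K ↥(s ⊔ t) = Module.rank K s + Module.rank K t := by
  rw [← rank_sup_add_rank_inf_eq, h.eq_bot, rank_bot, add_zero]

lemma rank_sup_span_singleton {s : Submodule K V} {v : V} (hv : v ∉ s) :
    Module.rank K ↥(s ⊔ K ∙ v) = Module.rank K s + 1 := by
  rw [rank_sup_of_disjoint (disjoint_span_singleton_of_notMem hv),
    rank_span_singleton (ne_zero_of_notMem hv)]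

lemma map_mkQ_sup_span_singleton (M : Submodule K V) (v : V) :
    (M ⊔ K ∙ v).map M.mkQ = K ∙ M.mkQ v := by
  rw [Submodule.map_sup, mkQ_map_self, bot_sup_eq, map_span, image_singleton]

lemma meets_of_mem {X Y : Submodule K V} {v : V} (hv : v ≠ 0) (hX : v ∈ X) (hY : v ∈ Y) :
    Meets X Y :=
  (Submodule.ne_bot_iff _).2 ⟨v, ⟨hX, hY⟩, hv⟩

lemma Meets.mono {X Y X' Y' : Submodule K V} (h : Meets X Y) (hX : X ≤ X') (hY : Y ≤ Y') :
    Meets X' Y' :=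
  fun h' => h (eq_bot_iff.2 ((inf_le_inf hX hY).trans h'.le))

lemma Meets.not_distant {X Y : Submodule K V} (h : Meets X Y) : ¬ Distant X Y :=
  fun hd => h hd.disjoint.eq_bot

lemma not_distant_of_mem {X Y : Submodule K V} {v : V} (hv : v ≠ 0) (hX : v ∈ X)
    (hY : v ∈ Y) : ¬ Distant X Y :=
  (meets_of_mem hv hX hY).not_distant

lemma Distant.ne [Nontrivial V] {X Y : Submodule K V} (h : Distant X Y) : X ≠ Y := by
  rintro rfl
  exact bot_ne_top ((disjoint_self.1 h.disjoint).symm.trans (codisjoint_self.1 h.codisjoint))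

/-! ### The Grassmannian -/

lemma mem_grass_iff_rank_eq {X Y : Submodule K V} (h : IsCompl X Y) :
    X ∈ Grass K V ↔ Module.rank K X = Module.rank K Y := by
  rw [← Module.nonempty_linearEquiv_iff_rank_eq]
  exact ⟨fun ⟨e⟩ => ⟨e.trans (quotientEquivOfIsCompl X Y h)⟩,
    fun ⟨e⟩ => ⟨e.trans (quotientEquivOfIsCompl X Y h).symm⟩⟩

lemma IsCompl.mem_grass_iff {X Y : Submodule K V} (h : IsCompl X Y) :
    X ∈ Grass K V ↔ Y ∈ Grass K V := by
  rw [mem_grass_iff_rank_eq h, mem_grass_iff_rank_eq h.symm, eq_comm]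

lemma exists_isCompl_mem_grass_of_disjoint {Z U : Submodule K V} (hZ : Z ∈ Grass K V)
    (hU : Disjoint U Z) : ∃ W ∈ Grass K V, IsCompl Z W ∧ U ≤ W := by
  obtain ⟨C, hC⟩ := Submodule.exists_isCompl (Z ⊔ U)
  have hW : IsCompl Z (U ⊔ C) :=
    ⟨hU.symm.disjoint_sup_right_of_disjoint_sup_left hC.disjoint,
      codisjoint_iff.2 (by rw [← sup_assoc]; exact hC.sup_eq_top)⟩
  exact ⟨U ⊔ C, hW.mem_grass_iff.1 hZ, hW, le_sup_left⟩

lemma exists_isCompl_mem_grass_of_notMem {Z : Submodule K V} {v : V} (hZ : Z ∈ Grass K V)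
    (hv : v ∉ Z) : ∃ W ∈ Grass K V, IsCompl Z W ∧ v ∈ W := by
  obtain ⟨W, hW, hZW, hle⟩ :=
    exists_isCompl_mem_grass_of_disjoint hZ (disjoint_span_singleton_of_notMem hv).symm
  exact ⟨W, hW, hZW, hle (mem_span_singleton_self v)⟩

lemma sup_span_singleton_mem_grass {M : Submodule K V} {r w : V}
    (hX : M ⊔ K ∙ r ∈ Grass K V) (hr : r ∉ M) (hw : w ∉ M ⊔ K ∙ r) :
    M ⊔ K ∙ w ∈ Grass K V := by
  have hrw : r ∉ M ⊔ K ∙ w := fun h => hw (mem_sup_span_singleton_exchange h hr)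
  obtain ⟨C, hC⟩ := Submodule.exists_isCompl (M ⊔ K ∙ r ⊔ K ∙ w)
  have hC' : IsCompl (M ⊔ K ∙ w ⊔ K ∙ r) C := by rwa [sup_right_comm]
  rw [mem_grass_iff_rank_eq (isCompl_sup_span_singleton_of_isCompl hC hw),
    rank_sup_span_singleton hr,
    rank_sup_span_singleton (notMem_of_isCompl_sup_span_singleton hC hw)] at hX
  rw [mem_grass_iff_rank_eq (isCompl_sup_span_singleton_of_isCompl hC' hrw),
    rank_sup_span_singleton fun h => hw (mem_sup_left h),
    rank_sup_span_singleton (notMem_of_isCompl_sup_span_singleton hC' hrw), hX]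

lemma isCompl_range_add {X Y : Submodule K V} (h : IsCompl X Y) (φ : X →ₗ[K] Y) :
    IsCompl Y (LinearMap.range (X.subtype + Y.subtype ∘ₗ φ)) := by
  refine ⟨disjoint_def.2 ?_, codisjoint_iff.2 (eq_top_iff.2 ?_)⟩
  · rintro _ hv ⟨x, rfl⟩
    have hx : x = 0 := by
      simpa using disjoint_def.1 h.disjoint _ x.2 (by simpa using Y.sub_mem hv (φ x).2)
    simp [hx]
  · rw [← h.sup_eq_top]
    refine sup_le (fun x hx => ?_) le_sup_left
    have := sub_mem (mem_sup_right (LinearMap.mem_range_self _ ⟨x, hx⟩) :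
      _ ∈ Y ⊔ LinearMap.range (X.subtype + Y.subtype ∘ₗ φ)) (mem_sup_left (φ ⟨x, hx⟩).2)
    simpa using this

lemma exists_distant_distant {X Y : Submodule K V} (hX : X ∈ Grass K V) (h : Distant X Y) :
    ∃ W ∈ Grass K V, Distant X W ∧ Distant Y W := by
  obtain ⟨φ⟩ := Module.nonempty_linearEquiv_iff_rank_eq.2 ((mem_grass_iff_rank_eq h).1 hX)
  have hW : LinearMap.range (Y.subtype + X.subtype ∘ₗ φ.symm.toLinearMap) =
      LinearMap.range (X.subtype + Y.subtype ∘ₗ φ.toLinearMap) := by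
    rw [← LinearMap.range_comp_of_range_eq_top _ φ.symm.range]
    congr 1
    ext
    simp [add_comm]
  have hXW := isCompl_range_add h.symm φ.symm.toLinearMap
  rw [hW] at hXW
  exact ⟨_, hXW.mem_grass_iff.1 hX, hXW, isCompl_range_add h φ.toLinearMap⟩

/-! ### Adjacency -/

lemma quotRank_eq_rank_map_mkQ (M E : Submodule K V) :
    quotRank M E = Module.rank K (E.map M.mkQ) := by
  have hker : LinearMap.ker (M.mkQ ∘ₗ E.subtype) = M.comap E.subtype := by
    rw [LinearMap.ker_comp, ker_mkQ]
  have hrange : LinearMap.range (M.mkQ ∘ₗ E.subtype) = E.map M.mkQ := by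
    rw [LinearMap.range_comp, range_subtype]
  exact ((quotEquivOfEq _ _ hker.symm).trans ((M.mkQ ∘ₗ E.subtype).quotKerEquivRange.trans
    (LinearEquiv.ofEq _ _ hrange))).rank_eq

lemma quotRank_eq_one_iff {M E : Submodule K V} (hME : M ≤ E) :
    quotRank M E = 1 ↔ ∃ v ∉ M, E = M ⊔ K ∙ v := by
  rw [quotRank_eq_rank_map_mkQ]
  constructor
  · rw [rank_submodule_eq_one_iff]
    rintro ⟨_, ⟨v, hvE, rfl⟩, hv0, hle⟩
    refine ⟨v, by simpa using hv0,
      le_antisymm ?_ (sup_le hME ((span_singleton_le_iff_mem _ _).2 hvE))⟩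
    rw [← comap_map_mkQ, map_span, image_singleton]
    exact map_le_iff_le_comap.1 hle
  · rintro ⟨v, hvM, rfl⟩
    rw [map_mkQ_sup_span_singleton, rank_span_singleton (by simpa using hvM)]

lemma adjacent_iff {X Y : Submodule K V} : Adjacent X Y ↔
    (∃ a ∉ X ⊓ Y, X = X ⊓ Y ⊔ K ∙ a) ∧ ∃ b ∉ X ⊓ Y, Y = X ⊓ Y ⊔ K ∙ b :=
  and_congr (quotRank_eq_one_iff inf_le_left) (quotRank_eq_one_iff inf_le_right)

lemma adjacent_sup_span_singleton {M : Submodule K V} {p r : V} (hp : p ∉ M ⊔ K ∙ r)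
    (hr : r ∉ M) : Adjacent (M ⊔ K ∙ p) (M ⊔ K ∙ r) := by
  have hinf : (M ⊔ K ∙ p) ⊓ (M ⊔ K ∙ r) = M := by
    rw [sup_inf_assoc_of_le _ le_sup_left, (disjoint_span_singleton_of_notMem hp).symm.eq_bot,
      sup_bot_eq]
  rw [Adjacent, hinf, quotRank_eq_one_iff le_sup_left, quotRank_eq_one_iff le_sup_left]
  exact ⟨⟨p, fun h => hp (mem_sup_left h), rfl⟩, ⟨r, hr, rfl⟩⟩

lemma not_distant_iff_meets_of_adjacent {W E₀ E : Submodule K V} (hadj : Adjacent W E₀)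
    (hD : Distant E₀ E) : ¬ Distant W E ↔ Meets W E := by
  refine ⟨fun hnd hWE => hnd ?_, Meets.not_distant⟩
  obtain ⟨⟨p, hpM, hW⟩, ⟨q, -, hE₀⟩⟩ := adjacent_iff.1 hadj
  have hpEM : p ∉ E ⊔ W ⊓ E₀ := by
    refine (disjoint_span_singleton' (ne_zero_of_notMem hpM)).1
      ((disjoint_span_singleton_of_notMem hpM).disjoint_sup_left_of_disjoint_sup_right ?_)
    rw [← hW, disjoint_iff, inf_comm, hWE]
  have htop : E ⊔ W ⊓ E₀ ⊔ K ∙ q = ⊤ := by rw [sup_assoc, ← hE₀, sup_comm, hD.sup_eq_top]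
  rw [Distant, hW]
  exact (isCompl_sup_span_singleton (hD.disjoint.symm.mono_right inf_le_right) htop hpEM).symm

def AdjacentByDistance (X Y : Submodule K V) : Prop :=
  ∃ Z ∈ Grass K V, Z ≠ X ∧ Z ≠ Y ∧ ∀ W ∈ Grass K V, Distant W Z → Distant W X ∨ Distant W Y

lemma Adjacent.adjacentByDistance {X Y : Submodule K V} (hX : X ∈ Grass K V)
    (h : Adjacent X Y) : AdjacentByDistance X Y := by
  obtain ⟨⟨a, haM, hXa⟩, ⟨b, hbM, hYb⟩⟩ := adjacent_iff.1 h
  set M := X ⊓ Y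
  have ha : a ∈ X := hXa ▸ mem_sup_right (mem_span_singleton_self a)
  have hb : b ∈ Y := hYb ▸ mem_sup_right (mem_span_singleton_self b)
  have habX : a + b ∉ X := fun h => hbM ⟨by simpa using X.sub_mem h ha, hb⟩
  have habY : a + b ∉ Y := fun h => haM ⟨ha, by simpa using Y.sub_mem h hb⟩
  have habM : a + b ∉ M := fun h => habX h.1
  have habZ : a + b ∈ M ⊔ K ∙ (a + b) := mem_sup_right (mem_span_singleton_self _)
  refine ⟨M ⊔ K ∙ (a + b), sup_span_singleton_mem_grass (hXa ▸ hX) haM (hXa ▸ habX),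
    fun h => habX (h ▸ habZ), fun h => habY (h ▸ habZ), fun W _ hWZ => ?_⟩
  -- `W ⊔ M` is a hyperplane missing `a + b`, hence missing `a` or `b`
  have hWM : Disjoint W M := hWZ.disjoint.mono_right le_sup_left
  have htop : W ⊔ M ⊔ K ∙ (a + b) = ⊤ := by rw [sup_assoc]; exact hWZ.sup_eq_top
  have hab : a + b ∉ W ⊔ M := (disjoint_span_singleton' (ne_zero_of_notMem habM)).1
    ((disjoint_span_singleton_of_notMem habM).disjoint_sup_left_of_disjoint_sup_right
      hWZ.disjoint)
  by_cases haU : a ∈ W ⊔ M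
  · right
    rw [Distant, hYb]
    exact isCompl_sup_span_singleton hWM htop fun hb => hab (add_mem haU hb)
  · left
    rw [Distant, hXa]
    exact isCompl_sup_span_singleton hWM htop haU

lemma not_distant_of_le_sup {Z W S X : Submodule K V} (hZW : IsCompl Z W) (hSZ : S < Z)
    (hX : X ≤ W ⊔ S) : ¬ Distant W X := by
  intro hWX
  have hWS : S ⊔ W = ⊤ := by
    rw [sup_comm, eq_top_iff, ← hWX.sup_eq_top]
    exact sup_le le_sup_left hX
  have := sup_inf_assoc_of_le W hSZ.le
  rw [hWS, top_inf_eq, inf_comm, hZW.inf_eq_bot, sup_bot_eq] at this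
  exact hSZ.ne this.symm

lemma exists_isCompl_not_distant {Z Y : Submodule K V} (hZ : Z ∈ Grass K V) (hYZ : Y ≠ Z) :
    ∃ W ∈ Grass K V, IsCompl Z W ∧ ¬ Distant W Y := by
  by_cases hY : Y ≤ Z
  · obtain ⟨W, hW⟩ := Submodule.exists_isCompl Z
    exact ⟨W, hW.mem_grass_iff.1 hZ, hW,
      not_distant_of_le_sup hW (lt_of_le_of_ne hY hYZ) le_sup_right⟩
  · obtain ⟨y, hyY, hyZ⟩ := SetLike.not_le_iff_exists.1 hY
    obtain ⟨W, hW, hZW, hyW⟩ := exists_isCompl_mem_grass_of_notMem hZ hyZ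
    exact ⟨W, hW, hZW, not_distant_of_mem (ne_zero_of_notMem hyZ) hyW hyY⟩

lemma exists_isCompl_not_distant_of_independent {Z X Y : Submodule K V} {x y : V}
    (hZ : Z ∈ Grass K V) (hx : x ∈ X) (hy : y ∈ Y) (hxZ : x ∉ Z) (hyZ : y ∉ Z ⊔ K ∙ x) :
    ∃ W ∈ Grass K V, IsCompl Z W ∧ ¬ Distant W X ∧ ¬ Distant W Y := by
  obtain ⟨W, hW, hZW, hle⟩ := exists_isCompl_mem_grass_of_disjoint hZ (U := K ∙ y ⊔ K ∙ x)
    ((disjoint_span_singleton_of_notMem hxZ).symm.disjoint_sup_left_of_disjoint_sup_right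
      (sup_comm Z _ ▸ disjoint_span_singleton_of_notMem hyZ).symm)
  exact ⟨W, hW, hZW,
    not_distant_of_mem (ne_zero_of_notMem hxZ) (hle (mem_sup_right (mem_span_singleton_self x))) hx,
    not_distant_of_mem (ne_zero_of_notMem hyZ) (hle (mem_sup_left (mem_span_singleton_self y))) hy⟩

lemma exists_isCompl_not_distant_of_mem_sup {Z X Y : Submodule K V} {x y z : V}
    (hZ : Z ∈ Grass K V) (hy : y ∈ Y) (hyZ : y ∉ Z) (hz : z ∈ Z) (hX : X ≤ X ⊓ Z ⊔ K ∙ x)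
    (hx : x ∈ K ∙ y ⊔ K ∙ z) (hXZ : X ⊓ Z ⊔ K ∙ z ≠ Z) :
    ∃ W ∈ Grass K V, IsCompl Z W ∧ ¬ Distant W X ∧ ¬ Distant W Y := by
  obtain ⟨W, hW, hZW, hyW⟩ := exists_isCompl_mem_grass_of_notMem hZ hyZ
  refine ⟨W, hW, hZW, not_distant_of_le_sup hZW
    (lt_of_le_of_ne (sup_le inf_le_right ((span_singleton_le_iff_mem _ _).2 hz)) hXZ)
    (hX.trans (sup_le (le_sup_left.trans le_sup_right) ((span_singleton_le_iff_mem _ _).2 ?_))),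
    not_distant_of_mem (ne_zero_of_notMem hyZ) hyW hy⟩
  exact sup_le_sup ((span_singleton_le_iff_mem _ _).2 hyW) le_sup_right hx

lemma exists_isCompl_not_distant_of_le_sup_span_singleton {Z X Y : Submodule K V} {x y : V}
    (hZ : Z ∈ Grass K V) (hx : x ∈ X) (hy : y ∈ Y) (hxZ : x ∉ Z) (hxy : y - x ∈ Z)
    (hX : X ≤ Z ⊔ K ∙ x) (hY : Y ≤ Z ⊔ K ∙ x) (hXY : X ⊓ Y ≤ Z) (hadj : ¬ Adjacent X Y) :
    ∃ W ∈ Grass K V, IsCompl Z W ∧ ¬ Distant W X ∧ ¬ Distant W Y := by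
  set z := y - x
  have hyZ : y ∉ Z := fun h => hxZ (by simpa [z] using Z.sub_mem h hxy)
  have hxA := eq_inf_sup_span_singleton hx hX
  have hyB := eq_inf_sup_span_singleton hy
    (by rwa [sup_span_singleton_eq_of_mem (hY hy) hyZ] : Y ≤ Z ⊔ K ∙ y)
  by_cases hA : X ⊓ Z ⊔ K ∙ z = Z
  swap
  · refine exists_isCompl_not_distant_of_mem_sup hZ hy hyZ hxy hxA.le ?_ hA
    simpa [z] using sub_mem (mem_sup_left (mem_span_singleton_self y) : y ∈ K ∙ y ⊔ K ∙ z)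
      (mem_sup_right (mem_span_singleton_self z))
  by_cases hB : Y ⊓ Z ⊔ K ∙ z = Z
  swap
  · have hy' : y ∈ K ∙ x ⊔ K ∙ z := by
      simpa [z] using add_mem (mem_sup_left (mem_span_singleton_self x) : x ∈ K ∙ x ⊔ K ∙ z)
        (mem_sup_right (mem_span_singleton_self z))
    obtain ⟨W, hW, hZW, hWY, hWX⟩ :=
      exists_isCompl_not_distant_of_mem_sup hZ hx hxZ hxy hyB.le hy' hB
    exact ⟨W, hW, hZW, hWX, hWY⟩
  -- `K ∙ z` complements both `X ⊓ Z` and `Y ⊓ Z` in `Z` but misses their sum, so they coincide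
  have hz : z ∉ X ⊓ Z ⊔ Y ⊓ Z := by
    intro hz
    obtain ⟨a, ha, b, hb, hab⟩ := mem_sup.1 hz
    have hv : x + a ∈ X ⊓ Y := ⟨add_mem hx ha.1, by
      rw [show x + a = y - b by rw [eq_sub_iff_add_eq, add_assoc, hab, add_sub_cancel]]
      exact sub_mem hy hb.1⟩
    exact hxZ (by simpa using Z.sub_mem (hXY hv) ha.2)
  have hAB : X ⊓ Z = Y ⊓ Z :=
    le_antisymm (le_of_le_sup_span_singleton (sup_comm (X ⊓ Z) _ ▸ hz) (inf_le_right.trans hB.ge))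
      (le_of_le_sup_span_singleton hz (inf_le_right.trans hA.ge))
  refine absurd ?_ hadj
  rw [hxA, hyB, ← hAB]
  refine adjacent_sup_span_singleton ?_ fun h => hyZ h.2
  rw [hAB, ← hyB]
  exact fun h => hxZ (hXY ⟨hx, h⟩)

lemma exists_isCompl_not_distant_of_not_adjacent {Z X Y : Submodule K V} (hZ : Z ∈ Grass K V)
    (hXZ : X ≠ Z) (hYZ : Y ≠ Z) (hadj : ¬ Adjacent X Y) :
    ∃ W ∈ Grass K V, IsCompl Z W ∧ ¬ Distant W X ∧ ¬ Distant W Y := by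
  by_cases hXZ' : X ≤ Z
  · obtain ⟨W, hW, hZW, hWY⟩ := exists_isCompl_not_distant hZ hYZ
    exact ⟨W, hW, hZW, not_distant_of_le_sup hZW (lt_of_le_of_ne hXZ' hXZ) le_sup_right, hWY⟩
  by_cases hYZ' : Y ≤ Z
  · obtain ⟨W, hW, hZW, hWX⟩ := exists_isCompl_not_distant hZ hXZ
    exact ⟨W, hW, hZW, hWX, not_distant_of_le_sup hZW (lt_of_le_of_ne hYZ' hYZ) le_sup_right⟩
  obtain ⟨x, hx, hxZ⟩ := SetLike.not_le_iff_exists.1 hXZ'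
  obtain ⟨y, hy, hyZ⟩ := SetLike.not_le_iff_exists.1 hYZ'
  by_cases hY : Y ≤ Z ⊔ K ∙ x
  swap
  · obtain ⟨y', hy', hy'Z⟩ := SetLike.not_le_iff_exists.1 hY
    exact exists_isCompl_not_distant_of_independent hZ hx hy' hxZ hy'Z
  by_cases hX : X ≤ Z ⊔ K ∙ x
  swap
  · obtain ⟨x', hx', hx'Z⟩ := SetLike.not_le_iff_exists.1 hX
    rw [← sup_span_singleton_eq_of_mem (hY hy) hyZ] at hx'Z
    obtain ⟨W, hW, hZW, hWY, hWX⟩ := exists_isCompl_not_distant_of_independent hZ hy hx' hyZ hx'Z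
    exact ⟨W, hW, hZW, hWX, hWY⟩
  by_cases hXY : X ⊓ Y ≤ Z
  swap
  · obtain ⟨v, hv, hvZ⟩ := SetLike.not_le_iff_exists.1 hXY
    obtain ⟨W, hW, hZW, hvW⟩ := exists_isCompl_mem_grass_of_notMem hZ hvZ
    exact ⟨W, hW, hZW, not_distant_of_mem (ne_zero_of_notMem hvZ) hvW hv.1,
      not_distant_of_mem (ne_zero_of_notMem hvZ) hvW hv.2⟩
  obtain ⟨z, hz, c, hzc⟩ : ∃ z ∈ Z, ∃ c : K, z + c • x = y := by
    obtain ⟨z, hz, w, hw, hzw⟩ := mem_sup.1 (hY hy)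
    obtain ⟨c, rfl⟩ := mem_span_singleton.1 hw
    exact ⟨z, hz, c, hzw⟩
  have hc : c ≠ 0 := by
    rintro rfl
    exact hyZ (by simpa [← hzc] using hz)
  refine exists_isCompl_not_distant_of_le_sup_span_singleton hZ hx (Y.smul_mem c⁻¹ hy) hxZ ?_
    hX hY hXY hadj
  rw [← hzc, smul_add, smul_smul, inv_mul_cancel₀ hc, one_smul, add_sub_cancel_right]
  exact Z.smul_mem _ hz

lemma adjacent_iff_adjacentByDistance {X Y : Submodule K V} (hX : X ∈ Grass K V) :
    Adjacent X Y ↔ AdjacentByDistance X Y := by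
  refine ⟨Adjacent.adjacentByDistance hX, fun ⟨Z, hZ, hZX, hZY, hdist⟩ => ?_⟩
  by_contra hadj
  obtain ⟨W, hW, hZW, hWX, hWY⟩ :=
    exists_isCompl_not_distant_of_not_adjacent hZ (Ne.symm hZX) (Ne.symm hZY) hadj
  exact (hdist W hW hZW.symm).elim hWX hWY

/-! ### Conditions (R2) and (⊠2) -/

lemma isLine_sup_span_singleton {E₁ E₂ : Submodule K V} {q₁ q₂ : V} (hE : Disjoint E₁ E₂)
    (hq₁ : q₁ ∈ E₁) (hq₂ : q₂ ∈ E₂) (h₁ : q₁ ≠ 0) (h₂ : q₂ ≠ 0) :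
    IsLine (K ∙ q₁ ⊔ K ∙ q₂) := by
  rw [IsLine, rank_sup_of_disjoint (hE.mono ((span_singleton_le_iff_mem _ _).2 hq₁)
    ((span_singleton_le_iff_mem _ _).2 hq₂)), rank_span_singleton h₁, rank_span_singleton h₂,
    one_add_one_eq_two]

lemma meets_of_le_sup_span_singleton {L M : Submodule K V} {p : V} (hL : L ≤ M ⊔ K ∙ p)
    (h : 1 < Module.rank K L) : Meets L M := by
  intro hLM
  have hinj : Function.Injective (M.mkQ ∘ₗ L.subtype) := by
    rw [← LinearMap.ker_eq_bot, LinearMap.ker_comp, ker_mkQ, ← disjoint_iff_comap_eq_bot,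
      disjoint_iff, hLM]
  have hle : LinearMap.range (M.mkQ ∘ₗ L.subtype) ≤ K ∙ M.mkQ p := by
    rw [LinearMap.range_comp, range_subtype, ← map_mkQ_sup_span_singleton]
    exact map_mono hL
  have := (rank_range_of_injective _ hinj).symm.trans_le
    ((rank_mono hle).trans (rank_span_le _))
  rw [Cardinal.mk_singleton] at this
  exact this.not_gt h

lemma boxTwo_of_meetsThreeMeetsAll {R : Set (Submodule K V)} (hR : R.Pairwise Distant)
    (h : MeetsThreeMeetsAll R) : BoxTwo R := by
  intro E₀ hE₀ E₁ hE₁ E₂ hE₂ h01 h02 h12 W _ hadj hW₁ hW₂ E hE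
  rw [not_distant_iff_meets_of_adjacent hadj (hR hE₀ hE₁ h01)] at hW₁
  rw [not_distant_iff_meets_of_adjacent hadj (hR hE₀ hE₂ h02)] at hW₂
  obtain ⟨q₁, ⟨hq₁W, hq₁⟩, hq₁0⟩ := (Submodule.ne_bot_iff _).1 hW₁
  obtain ⟨q₂, ⟨hq₂W, hq₂⟩, hq₂0⟩ := (Submodule.ne_bot_iff _).1 hW₂
  have hL := isLine_sup_span_singleton (hR hE₁ hE₂ h12).disjoint hq₁ hq₂ hq₁0 hq₂0
  have hLW : K ∙ q₁ ⊔ K ∙ q₂ ≤ W :=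
    sup_le ((span_singleton_le_iff_mem _ _).2 hq₁W) ((span_singleton_le_iff_mem _ _).2 hq₂W)
  obtain ⟨⟨p, -, hW⟩, -⟩ := adjacent_iff.1 hadj
  have hL₀ : Meets (K ∙ q₁ ⊔ K ∙ q₂) E₀ :=
    (meets_of_le_sup_span_singleton (hLW.trans hW.le) (by rw [hL]; exact Cardinal.one_lt_two)).mono
      le_rfl inf_le_right
  have hLE := h _ hL E₀ hE₀ E₁ hE₁ E₂ hE₂ h01 h02 h12 hL₀
    (meets_of_mem hq₁0 (mem_sup_left (mem_span_singleton_self q₁)) hq₁)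
    (meets_of_mem hq₂0 (mem_sup_right (mem_span_singleton_self q₂)) hq₂) E hE
  exact (hLE.mono hLW le_rfl).not_distant

lemma exists_hyperplane_of_notMem_span_singleton {E : Submodule K V} {q μ : V} (hq : q ∈ E)
    (hμ : μ ∈ E) (hμq : μ ∉ K ∙ q) : ∃ M ≤ E, q ∈ M ∧ μ ∉ M ∧ E = M ⊔ K ∙ μ := by
  obtain ⟨C, hC⟩ := Submodule.exists_isCompl (K ∙ μ ⊔ K ∙ q)
  have hμC : μ ∉ K ∙ q ⊔ C := (disjoint_span_singleton' (ne_zero_of_notMem hμq)).1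
    ((disjoint_span_singleton_of_notMem hμq).symm.disjoint_sup_right_of_disjoint_sup_left
      hC.disjoint).symm
  refine ⟨E ⊓ (K ∙ q ⊔ C), inf_le_left, ⟨hq, mem_sup_left (mem_span_singleton_self q)⟩,
    fun h => hμC h.2, ?_⟩
  have htop : K ∙ q ⊔ C ⊔ K ∙ μ = ⊤ := by rw [← hC.sup_eq_top]; ac_rfl
  rw [inf_sup_assoc_of_le _ ((span_singleton_le_iff_mem _ _).2 hμ), htop, inf_top_eq]

lemma exists_add_mem_of_isLine {L E₀ E₁ E₂ : Submodule K V} (hL : IsLine L)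
    (h01 : Disjoint E₀ E₁) (h02 : Disjoint E₀ E₂) (h12 : Disjoint E₁ E₂)
    (m₀ : Meets L E₀) (m₁ : Meets L E₁) (m₂ : Meets L E₂) :
    ∃ p₁ ∈ L ⊓ E₁, ∃ p₂ ∈ L ⊓ E₂, p₁ ≠ 0 ∧ p₂ ≠ 0 ∧ p₁ + p₂ ∈ E₀ := by
  obtain ⟨q₀, ⟨hq₀L, hq₀⟩, hq₀0⟩ := (Submodule.ne_bot_iff _).1 m₀
  obtain ⟨q₁, hq₁, hq₁0⟩ := (Submodule.ne_bot_iff _).1 m₁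
  obtain ⟨q₂, hq₂, hq₂0⟩ := (Submodule.ne_bot_iff _).1 m₂
  have hq₁₂ : K ∙ q₁ ⊔ K ∙ q₂ ≤ L ⊓ E₁ ⊔ L ⊓ E₂ :=
    sup_le_sup ((span_singleton_le_iff_mem _ _).2 hq₁) ((span_singleton_le_iff_mem _ _).2 hq₂)
  -- `q₁` and `q₂` span the line `L`
  have hq₀' : q₀ ∈ K ∙ q₁ ⊔ K ∙ q₂ := by
    by_contra h
    have hle := rank_mono (sup_le (hq₁₂.trans (sup_le inf_le_left inf_le_left))
      ((span_singleton_le_iff_mem _ _).2 hq₀L))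
    rw [rank_sup_span_singleton h, isLine_sup_span_singleton h12 hq₁.2 hq₂.2 hq₁0 hq₂0, hL] at hle
    norm_num at hle
  obtain ⟨p₁, hp₁, p₂, hp₂, rfl⟩ := mem_sup.1 (hq₁₂ hq₀')
  refine ⟨p₁, hp₁, p₂, hp₂, ?_, ?_, hq₀⟩
  · rintro rfl
    rw [zero_add] at hq₀ hq₀0
    exact hq₀0 (disjoint_def.1 h02 _ hq₀ hp₂.2)
  · rintro rfl
    rw [add_zero] at hq₀ hq₀0
    exact hq₀0 (disjoint_def.1 h01 _ hq₀ hp₁.2)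

lemma mem_span_singleton_add_of_boxTwo {E₀ E₁ E₂ E : Submodule K V} (hE₀ : E₀ ∈ Grass K V)
    (hD : Distant E₀ E)
    (hbox : ∀ W ∈ Grass K V, Adjacent W E₀ → ¬ Distant W E₁ → ¬ Distant W E₂ → ¬ Distant W E)
    {p₁ p₂ μ : V} (hp₁ : p₁ ∈ E₁) (hp₂ : p₂ ∈ E₂) (hp₁E₀ : p₁ ∉ E₀) (hp₂0 : p₂ ≠ 0)
    (hq : p₁ + p₂ ∈ E₀) (hμ : μ ∈ E₀) (hμE : μ + p₁ ∈ E) : μ ∈ K ∙ (p₁ + p₂) := by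
  -- for a hyperplane `M` of `E₀` through `p₁ + p₂` missing `μ`, (⊠2) applies to
  -- `W = M ⊔ K ∙ p₁`, and the point where `W` meets `E` forces `μ ∈ M`
  by_contra hμq
  obtain ⟨M, hME₀, hqM, hμM, hE₀M⟩ := exists_hyperplane_of_notMem_span_singleton hq hμ hμq
  have hp₁W : p₁ ∈ M ⊔ K ∙ p₁ := mem_sup_right (mem_span_singleton_self p₁)
  have hp₂W : p₂ ∈ M ⊔ K ∙ p₁ := by simpa using sub_mem (mem_sup_left hqM) hp₁W
  have hadj : Adjacent (M ⊔ K ∙ p₁) E₀ := by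
    rw [hE₀M]
    exact adjacent_sup_span_singleton (hE₀M ▸ hp₁E₀) hμM
  have hWE := hbox _ (sup_span_singleton_mem_grass (hE₀M ▸ hE₀) hμM (hE₀M ▸ hp₁E₀)) hadj
    (not_distant_of_mem (ne_zero_of_notMem hp₁E₀) hp₁W hp₁) (not_distant_of_mem hp₂0 hp₂W hp₂)
  rw [not_distant_iff_meets_of_adjacent hadj hD] at hWE
  obtain ⟨w, ⟨hwW, hwE⟩, hw0⟩ := (Submodule.ne_bot_iff _).1 hWE
  obtain ⟨m, hm, _, hc, rfl⟩ := mem_sup.1 hwW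
  obtain ⟨c, rfl⟩ := mem_span_singleton.1 hc
  have hcμ : c • μ - m = 0 := by
    refine disjoint_def.1 hD.disjoint _ (sub_mem (E₀.smul_mem c hμ) (hME₀ hm)) ?_
    simpa [smul_add] using sub_mem (E.smul_mem c hμE) hwE
  rcases eq_or_ne c 0 with rfl | hc0
  · simp only [zero_smul, zero_sub, neg_eq_zero] at hcμ
    simp [hcμ] at hw0
  · exact hμM ((smul_mem_iff _ hc0).1 (sub_eq_zero.1 hcμ ▸ hm))

lemma meetsThreeMeetsAll_of_boxTwo {R : Set (Submodule K V)} (hR : IsDistantClique R)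
    (h : BoxTwo R) : MeetsThreeMeetsAll R := by
  intro L hL E₀ hE₀ E₁ hE₁ E₂ hE₂ h01 h02 h12 m₀ m₁ m₂ E hE
  obtain rfl | hE₀E := eq_or_ne E₀ E
  · exact m₀
  have hD := hR.2 hE₀ hE hE₀E
  have hD₁ := hR.2 hE₀ hE₁ h01
  obtain ⟨p₁, ⟨hp₁L, hp₁⟩, p₂, ⟨hp₂L, hp₂⟩, hp₁0, hp₂0, hq⟩ := exists_add_mem_of_isLine hL
    hD₁.disjoint (hR.2 hE₀ hE₂ h02).disjoint (hR.2 hE₁ hE₂ h12).disjoint m₀ m₁ m₂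
  have hp₁E₀ : p₁ ∉ E₀ := fun h => hp₁0 (disjoint_def.1 hD₁.disjoint _ h hp₁)
  -- `-μ` is the `E₀`-component of `p₁` in `V = E₀ ⊕ E`
  obtain ⟨μ, hμ, hμE⟩ : ∃ μ ∈ E₀, μ + p₁ ∈ E := by
    obtain ⟨a, ha, e, he, hae⟩ := mem_sup.1 (hD.sup_eq_top ▸ mem_top : p₁ ∈ E₀ ⊔ E)
    exact ⟨-a, neg_mem ha, by rwa [← hae, neg_add_cancel_left]⟩
  have hμq := mem_span_singleton_add_of_boxTwo (hR.1 hE₀) hD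
    (h E₀ hE₀ E₁ hE₁ E₂ hE₂ h01 h02 h12 · · · · · E hE) hp₁ hp₂ hp₁E₀ hp₂0 hq hμ hμE
  refine meets_of_mem (fun h0 => hp₁E₀ ?_)
    (add_mem ((span_singleton_le_iff_mem _ _).2 (add_mem hp₁L hp₂L) hμq) hp₁L) hμE
  rw [eq_neg_of_add_eq_zero_right h0]
  exact neg_mem hμ

lemma meetsThreeMeetsAll_iff_boxTwo {R : Set (Submodule K V)} (hR : IsDistantClique R) :
    MeetsThreeMeetsAll R ↔ BoxTwo R :=
  ⟨boxTwo_of_meetsThreeMeetsAll hR.2, meetsThreeMeetsAll_of_boxTwo hR⟩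

/-! ### Automorphisms of the distant graph -/

lemma hasThree_image_iff {f : Submodule K V → Submodule K V} {R : Set (Submodule K V)}
    (hf : InjOn f R) : HasThree (f '' R) ↔ HasThree R := by
  simp only [HasThree, exists_mem_image]
  refine exists_congr fun A => and_congr_right fun hA => exists_congr fun B =>
    and_congr_right fun hB => exists_congr fun C => and_congr_right fun hC => ?_
  rw [hf.ne_iff hA hB, hf.ne_iff hA hC, hf.ne_iff hB hC]

def IsDistantGraphAut (f : Submodule K V → Submodule K V) : Prop :=
  BijOn f (Grass K V) (Grass K V) ∧
    ∀ X ∈ Grass K V, ∀ Y ∈ Grass K V, (Distant X Y ↔ Distant (f X) (f Y))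

namespace IsDistantGraphAut

variable {f : Submodule K V → Submodule K V}

lemma adjacentByDistance_iff (hf : IsDistantGraphAut f) {X Y : Submodule K V}
    (hX : X ∈ Grass K V) (hY : Y ∈ Grass K V) :
    AdjacentByDistance (f X) (f Y) ↔ AdjacentByDistance X Y := by
  unfold AdjacentByDistance
  refine hf.1.exists.trans (exists_congr fun Z => and_congr_right fun hZ => ?_)
  rw [hf.1.injOn.ne_iff hZ hX, hf.1.injOn.ne_iff hZ hY]
  refine and_congr_right' (and_congr_right' (hf.1.forall.trans (forall₂_congr fun W hW => ?_)))
  rw [← hf.2 W hW Z hZ, ← hf.2 W hW X hX, ← hf.2 W hW Y hY]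

lemma adjacent_iff (hf : IsDistantGraphAut f) {X Y : Submodule K V} (hX : X ∈ Grass K V)
    (hY : Y ∈ Grass K V) : Adjacent (f X) (f Y) ↔ Adjacent X Y := by
  rw [adjacent_iff_adjacentByDistance (hf.1.mapsTo hX), adjacent_iff_adjacentByDistance hX,
    hf.adjacentByDistance_iff hX hY]

lemma isDistantClique_image_iff (hf : IsDistantGraphAut f) {R : Set (Submodule K V)}
    (hR : R ⊆ Grass K V) : IsDistantClique (f '' R) ↔ IsDistantClique R := by
  rw [IsDistantClique, IsDistantClique, (hf.1.injOn.mono hR).pairwise_image]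
  refine and_congr (iff_of_true (hf.1.mapsTo.mono_left hR).image_subset hR) ?_
  exact forall₂_congr fun A hA => forall₂_congr fun B hB => imp_congr_right fun _ =>
    (hf.2 A (hR hA) B (hR hB)).symm

lemma boxTwo_image_iff (hf : IsDistantGraphAut f) {R : Set (Submodule K V)}
    (hR : R ⊆ Grass K V) : BoxTwo (f '' R) ↔ BoxTwo R := by
  have hne {A B} (hA : A ∈ R) (hB : B ∈ R) : f A ≠ f B ↔ A ≠ B :=
    hf.1.injOn.ne_iff (hR hA) (hR hB)
  simp only [BoxTwo, forall_mem_image]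
  refine forall₂_congr fun E₀ h₀ => forall₂_congr fun E₁ h₁ => forall₂_congr fun E₂ h₂ => ?_
  rw [hne h₀ h₁, hne h₀ h₂, hne h₁ h₂]
  refine imp_congr_right fun _ => imp_congr_right fun _ => imp_congr_right fun _ =>
    hf.1.forall.trans (forall₂_congr fun W hW => ?_)
  rw [hf.adjacent_iff hW (hR h₀), ← hf.2 W hW _ (hR h₁), ← hf.2 W hW _ (hR h₂)]
  exact imp_congr_right fun _ => imp_congr_right fun _ => imp_congr_right fun _ =>
    forall₂_congr fun E hE => by rw [← hf.2 W hW E (hR hE)]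

lemma isPartialZRegulus_image_iff (hf : IsDistantGraphAut f) {R : Set (Submodule K V)}
    (hR : R ⊆ Grass K V) : IsPartialZRegulus (f '' R) ↔ IsPartialZRegulus R := by
  rw [IsPartialZRegulus, IsPartialZRegulus, hf.isDistantClique_image_iff hR,
    hasThree_image_iff (hf.1.injOn.mono hR)]
  refine and_congr_right fun ⟨hcl, _⟩ => ?_
  rw [meetsThreeMeetsAll_iff_boxTwo hcl,
    meetsThreeMeetsAll_iff_boxTwo ((hf.isDistantClique_image_iff hR).2 hcl),
    hf.boxTwo_image_iff hR]

lemma isZRegulus_image_iff (hf : IsDistantGraphAut f) {R : Set (Submodule K V)}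
    (hR : R ⊆ Grass K V) : IsZRegulus (f '' R) ↔ IsZRegulus R := by
  refine and_congr (hf.isPartialZRegulus_image_iff hR) ⟨fun h S hS hRS => ?_, fun h S hS hRS => ?_⟩
  · have hSG := hS.1.1.1
    exact (hf.1.injOn.image_eq_image_iff hR hSG).1
      (h _ ((hf.isPartialZRegulus_image_iff hSG).2 hS) (image_mono hRS))
  · obtain ⟨T, hT, rfl⟩ := subset_image_iff.1 (hf.1.image_eq.symm ▸ hS.1.1.1)
    rw [h T ((hf.isPartialZRegulus_image_iff hT).1 hS)
      fun A hA => (hf.1.injOn.mem_image_iff hT (hR hA)).1 (hRS (mem_image_of_mem f hA))]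

end IsDistantGraphAut

/-! ### Extending distant pairs to `Z`-reguli -/

lemma meetsThreeMeetsAll_of_ncard_le {R : Set (Submodule K V)} (hfin : R.Finite)
    (h : R.ncard ≤ 3) : MeetsThreeMeetsAll R := by
  intro L _ E₀ h₀ E₁ h₁ E₂ h₂ h01 h02 h12 m₀ m₁ m₂ E hE
  have hsub : {E₀, E₁, E₂} ⊆ R := insert_subset h₀ (insert_subset h₁ (singleton_subset_iff.2 h₂))
  rw [← eq_of_subset_of_ncard_le hsub
    (h.trans (ncard_eq_three.2 ⟨_, _, _, h01, h02, h12, rfl⟩).ge) hfin] at hE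
  rcases hE with rfl | rfl | rfl <;> assumption

lemma isPartialZRegulus_triple [Nontrivial V] {X Y W : Submodule K V} (hX : X ∈ Grass K V)
    (hY : Y ∈ Grass K V) (hW : W ∈ Grass K V) (hXY : Distant X Y) (hXW : Distant X W)
    (hYW : Distant Y W) : IsPartialZRegulus {X, Y, W} := by
  refine ⟨⟨⟨insert_subset hX (insert_subset hY (singleton_subset_iff.2 hW)), ?_⟩,
    ⟨X, by simp, Y, by simp, W, by simp, hXY.ne, hXW.ne, hYW.ne⟩⟩,
    meetsThreeMeetsAll_of_ncard_le (toFinite _) ((ncard_insert_le _ _).trans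
      (Nat.succ_le_succ ((ncard_insert_le _ _).trans (by rw [ncard_singleton]))))⟩
  unfold Distant at hXY hXW hYW
  simp [Set.pairwise_insert, Distant, hXY, hXW, hYW, hXY.symm, hXW.symm, hYW.symm]

lemma isPartialZRegulus_sUnion {c : Set (Set (Submodule K V))}
    (hc : ∀ R ∈ c, IsPartialZRegulus R) (hchain : IsChain (· ⊆ ·) c) (hne : c.Nonempty) :
    IsPartialZRegulus (⋃₀ c) := by
  have key {s : Set (Submodule K V)} (hs : s.Finite) (hsc : s ⊆ ⋃₀ c) : ∃ R ∈ c, s ⊆ R :=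
    hchain.directedOn.exists_mem_subset_of_finite_of_subset_sUnion hne hs hsc
  refine ⟨⟨⟨sUnion_subset fun R hR => (hc R hR).1.1.1, fun A hA B hB hAB => ?_⟩, ?_⟩, ?_⟩
  · obtain ⟨R, hR, hsub⟩ := key (toFinite {A, B}) (insert_subset hA (singleton_subset_iff.2 hB))
    exact (hc R hR).1.1.2 (hsub (by simp)) (hsub (by simp)) hAB
  · obtain ⟨R, hR⟩ := hne
    obtain ⟨A, hA, B, hB, C, hC, h⟩ := (hc R hR).1.2
    exact ⟨A, subset_sUnion_of_mem hR hA, B, subset_sUnion_of_mem hR hB, C,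
      subset_sUnion_of_mem hR hC, h⟩
  · intro L hL E₀ h₀ E₁ h₁ E₂ h₂ h01 h02 h12 m₀ m₁ m₂ E hE
    obtain ⟨R, hR, hsub⟩ := key (toFinite {E₀, E₁, E₂, E})
      (insert_subset h₀ (insert_subset h₁ (insert_subset h₂ (singleton_subset_iff.2 hE))))
    exact (hc R hR).2 L hL E₀ (hsub (by simp)) E₁ (hsub (by simp)) E₂ (hsub (by simp)) h01 h02
      h12 m₀ m₁ m₂ E (hsub (by simp))

lemma IsPartialZRegulus.exists_isZRegulus_superset {R₀ : Set (Submodule K V)}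
    (h : IsPartialZRegulus R₀) : ∃ R, IsZRegulus R ∧ R₀ ⊆ R := by
  obtain ⟨R, hR₀, hR⟩ := zorn_subset_nonempty {R | IsPartialZRegulus R}
    (fun c hc hchain hne => ⟨_, isPartialZRegulus_sUnion hc hchain hne,
      fun _ => subset_sUnion_of_mem⟩) R₀ h
  exact ⟨R, ⟨hR.prop, fun S hS hRS => hR.eq_of_subset hS hRS⟩, hR₀⟩

lemma exists_isZRegulus_of_distant [Nontrivial V] {X Y : Submodule K V} (hX : X ∈ Grass K V)
    (hY : Y ∈ Grass K V) (h : Distant X Y) : ∃ R, IsZRegulus R ∧ X ∈ R ∧ Y ∈ R := by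
  obtain ⟨W, hW, hXW, hYW⟩ := exists_distant_distant hX h
  obtain ⟨R, hR, hsub⟩ := (isPartialZRegulus_triple hX hY hW h hXW hYW).exists_isZRegulus_superset
  exact ⟨R, hR, hsub (by simp), hsub (by simp)⟩

lemma IsZRegulus.distant {R : Set (Submodule K V)} (hR : IsZRegulus R) {X Y : Submodule K V}
    (hX : X ∈ R) (hY : Y ∈ R) (hXY : X ≠ Y) : Distant X Y :=
  hR.1.1.1.2 hX hY hXY

theorem distantGraph_auto_iff_zReguli_auto_general (hV : 2 < Module.rank K V)
    (f : Submodule K V → Submodule K V)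
    (hf : Set.BijOn f (Grass K V) (Grass K V)) :
    (∀ X ∈ Grass K V, ∀ Y ∈ Grass K V, (Distant X Y ↔ Distant (f X) (f Y))) ↔
    (∀ R : Set (Submodule K V), R ⊆ Grass K V → (IsZRegulus R ↔ IsZRegulus (f '' R))) := by
  have : Nontrivial V := Module.rank_pos_iff_of_free.1 (zero_lt_two.trans hV)
  refine ⟨fun hfd R hR => (IsDistantGraphAut.isZRegulus_image_iff ⟨hf, hfd⟩ hR).symm,
    fun hreg X hX Y hY => ⟨fun h => ?_, fun h => ?_⟩⟩
  · obtain ⟨R, hR, hXR, hYR⟩ := exists_isZRegulus_of_distant hX hY h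
    exact ((hreg R hR.1.1.1.1).1 hR).distant (mem_image_of_mem f hXR) (mem_image_of_mem f hYR)
      (hf.injOn.ne hX hY h.ne)
  · obtain ⟨R, hR, hXR, hYR⟩ := exists_isZRegulus_of_distant (hf.mapsTo hX) (hf.mapsTo hY) h
    obtain ⟨T, hT, rfl⟩ := subset_image_iff.1 (hf.image_eq.symm ▸ hR.1.1.1.1)
    exact ((hreg T hT).2 hR).distant ((hf.injOn.mem_image_iff hT hX).1 hXR)
      ((hf.injOn.mem_image_iff hT hY).1 hYR) fun e => h.ne (congrArg f e)

/-- Corollary 5.3. A bijection of `𝒢` is an automorphism of the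
distant graph `(𝒢, △)` iff it is an automorphism of the space of `Z`-reguli
`(𝒢, ℜ)`, i.e. it and its inverse map `Z`-reguli onto `Z`-reguli. -/
theorem distantGraph_auto_iff_zReguli_auto (hV : 2 < Module.rank K V)
    (hG : (Grass K V).Nonempty)
    (f : Submodule K V → Submodule K V)
    (hf : Set.BijOn f (Grass K V) (Grass K V)) :
    (∀ X ∈ Grass K V, ∀ Y ∈ Grass K V, (Distant X Y ↔ Distant (f X) (f Y))) ↔
    (∀ R : Set (Submodule K V), R ⊆ Grass K V → (IsZRegulus R ↔ IsZRegulus (f '' R))) :=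
  distantGraph_auto_iff_zReguli_auto_general hV f hf
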